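/- arXiv:2203.01865 — 2 statements merged into one kernel-verified Lean document; each statement's English description precedes it below -/
import Mathlib

section
/- Let n, d ≥ 2 and T = Σ_{k=1}^{n+1} v_k^{⊗d} be a regular simplex tensor. If (v, μ) is an eigenpair of T with v = Σ_{k=1}^n α_k v_k, then for every permutation σ of {1,...,n+1}, the vector Σ_{k=1}^n α_k v_{σ(k)} is also an eigenvector of T with the same eigenvalue μ. -/
/-!
The Gram matrix of the simplex frame is `(1 + 1/n) I - (1/n) J`. Hence a relation
`∑ x_j v_j = 0` holds exactly when `x` is constant (the frame sums to zero), and the inner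
products `⟪∑ x_j v_{σ j}, v_{σ i}⟫ = ⟪∑ x_j v_j, v_i⟫` do not see the relabelling `σ`.
The eigen-equation for `v = ∑ x_j v_j` reads `∑ (⟪v, v_k⟫^(d-1) - μ x_k) v_k = 0`, so its
coefficients are constant; relabelling it by `σ` keeps it true and is exactly the
eigen-equation for `∑ x_j v_{σ j}`.
-/

open scoped RealInnerProductSpace BigOperators

noncomputable def simplexVec (n : ℕ) (k : Fin (n + 1)) : EuclideanSpace ℝ (Fin n) :=
  if h : (k : ℕ) < n then
    Real.sqrt (1 + 1 / n) • EuclideanSpace.single ⟨k, h⟩ 1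
      - ((Real.sqrt (n + 1) - 1) / (n : ℝ) ^ ((3 : ℝ) / 2)) •
        (WithLp.toLp 2 (fun _ => (1 : ℝ)) : EuclideanSpace ℝ (Fin n))
  else
    -(1 / Real.sqrt n) • (WithLp.toLp 2 (fun _ => (1 : ℝ)) : EuclideanSpace ℝ (Fin n))

open Finset Real

section SimplexGram

variable {ι E : Type*} [Fintype ι] [DecidableEq ι] [NormedAddCommGroup E] [InnerProductSpace ℝ E]
  {u : ι → E} {c : ℝ}

theorem inner_sum_smul_of_inner_eq_ite (hu : ∀ i j, ⟪u i, u j⟫ = if i = j then 1 else -c)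
    (x : ι → ℝ) (i : ι) : ⟪∑ j, x j • u j, u i⟫ = (1 + c) * x i - c * ∑ j, x j := by
  have hterm : ∀ j, ⟪x j • u j, u i⟫ = (if j = i then (1 + c) * x j else 0) - c * x j := by
    intro j
    rw [real_inner_smul_left, hu]
    split_ifs <;> ring
  simp only [sum_inner, hterm, sum_sub_distrib, sum_ite_eq', mem_univ, if_true, mul_sum]

theorem sum_eq_zero_of_inner_eq_ite (hu : ∀ i j, ⟪u i, u j⟫ = if i = j then 1 else -c)
    (hc : c * (Fintype.card ι - 1) = 1) : ∑ i, u i = 0 := by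
  have h : ∀ i, ⟪∑ j, u j, u i⟫ = 0 := by
    intro i
    have := inner_sum_smul_of_inner_eq_ite hu (fun _ => 1) i
    simp only [one_smul, sum_const, card_univ, nsmul_eq_mul, mul_one] at this
    linarith
  rw [← inner_self_eq_zero (𝕜 := ℝ), inner_sum, sum_eq_zero fun i _ => h i]

theorem sum_smul_eq_zero_iff_of_inner_eq_ite (hu : ∀ i j, ⟪u i, u j⟫ = if i = j then 1 else -c)
    (hc : 1 + c ≠ 0) (hsum : ∑ i, u i = 0) (x : ι → ℝ) :
    ∑ j, x j • u j = 0 ↔ ∀ i j, x i = x j := by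
  constructor
  · intro h i j
    have hx : ∀ i, (1 + c) * x i = c * ∑ j, x j := fun i => by
      rw [← sub_eq_zero, ← inner_sum_smul_of_inner_eq_ite hu, h, inner_zero_left]
    exact mul_left_cancel₀ hc ((hx i).trans (hx j).symm)
  · intro h
    rcases isEmpty_or_nonempty ι with hι | ⟨⟨i⟩⟩
    · exact Fintype.sum_empty _
    · rw [← smul_zero (x i), ← hsum, smul_sum]
      exact sum_congr rfl fun j _ => by rw [h i j]

theorem sum_smul_comp_perm_eq_zero_iff (hu : ∀ i j, ⟪u i, u j⟫ = if i = j then 1 else -c)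
    (hc : 1 + c ≠ 0) (hsum : ∑ i, u i = 0) (x : ι → ℝ) (σ : Equiv.Perm ι) :
    ∑ j, x j • u (σ j) = 0 ↔ ∑ j, x j • u j = 0 := by
  have hreindex : ∑ j, x j • u (σ j) = ∑ j, x (σ.symm j) • u j := by
    simp only [← Equiv.sum_comp σ (fun j => x (σ.symm j) • u j), Equiv.symm_apply_apply]
  rw [hreindex, sum_smul_eq_zero_iff_of_inner_eq_ite hu hc hsum,
    sum_smul_eq_zero_iff_of_inner_eq_ite hu hc hsum]
  exact ⟨fun h i j => by simpa using h (σ i) (σ j), fun h i j => h _ _⟩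

theorem sum_apply_inner_smul_eq_smul_comp_perm (hu : ∀ i j, ⟪u i, u j⟫ = if i = j then 1 else -c)
    (hc : 1 + c ≠ 0) (hsum : ∑ i, u i = 0) (x : ι → ℝ) (σ : Equiv.Perm ι) (f : ℝ → ℝ) (μ : ℝ)
    (h : ∑ k, f ⟪∑ j, x j • u j, u k⟫ • u k = μ • ∑ j, x j • u j) :
    ∑ k, f ⟪∑ j, x j • u (σ j), u k⟫ • u k = μ • ∑ j, x j • u (σ j) := by
  have huσ : ∀ i j, ⟪u (σ i), u (σ j)⟫ = if i = j then 1 else -c := fun i j => by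
    simp only [hu, σ.injective.eq_iff]
  have hinner : ∀ k, ⟪∑ j, x j • u (σ j), u (σ k)⟫ = ⟪∑ j, x j • u j, u k⟫ := fun k => by
    rw [inner_sum_smul_of_inner_eq_ite huσ, inner_sum_smul_of_inner_eq_ite hu]
  rw [← Equiv.sum_comp σ (fun k => f ⟪∑ j, x j • u (σ j), u k⟫ • u k)]
  rw [← sub_eq_zero, smul_sum, ← sum_sub_distrib] at h ⊢
  simp only [hinner, smul_smul, ← sub_smul] at h ⊢
  exact (sum_smul_comp_perm_eq_zero_iff hu hc hsum _ σ).2 h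

end SimplexGram

section SimplexVec

variable {n : ℕ}

local notation "𝟙" => (WithLp.toLp 2 (fun _ => (1 : ℝ)) : EuclideanSpace ℝ (Fin n))

theorem simplexVec_castSucc (hn : 0 < n) (k : Fin n) :
    simplexVec n k.castSucc =
      (√(n + 1) / √n) • EuclideanSpace.single k 1 - ((√(n + 1) - 1) / (n * √n)) • 𝟙 := by
  have hpow : (n : ℝ) ^ ((3 : ℝ) / 2) = n * √n := by
    rw [show (3 : ℝ) / 2 = 1 + 1 / 2 by norm_num, rpow_add (by positivity), rpow_one,
      ← sqrt_eq_rpow]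
  have hsqrt : √(1 + 1 / (n : ℝ)) = √(n + 1) / √n := by
    rw [← sqrt_div (by positivity), add_div, div_self (by positivity), add_comm]
  rw [simplexVec, dif_pos (by simp), hpow, hsqrt]
  rfl

theorem simplexVec_last : simplexVec n (Fin.last n) = -(1 / √n) • 𝟙 := by
  simp [simplexVec]

theorem inner_single_one_single_one (k j : Fin n) :
    ⟪EuclideanSpace.single k (1 : ℝ), EuclideanSpace.single j 1⟫ = if k = j then 1 else 0 := by
  simp [EuclideanSpace.inner_single_left]

theorem inner_single_one_ones (k : Fin n) : ⟪EuclideanSpace.single k (1 : ℝ), 𝟙⟫ = 1 := by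
  simp [EuclideanSpace.inner_single_left]

theorem inner_ones_single_one (k : Fin n) : ⟪𝟙, EuclideanSpace.single k (1 : ℝ)⟫ = 1 := by
  rw [real_inner_comm, inner_single_one_ones]

theorem inner_ones_ones : ⟪𝟙, 𝟙⟫ = n := by
  rw [real_inner_self_eq_norm_sq, EuclideanSpace.norm_sq_eq]
  simp

theorem inner_simplexVec (hn : 0 < n) (k j : Fin (n + 1)) :
    ⟪simplexVec n k, simplexVec n j⟫ = if k = j then 1 else -(1 / (n : ℝ)) := by
  have hn' : (0 : ℝ) < n := by exact_mod_cast hn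
  have hsn : √n ^ 2 = n := sq_sqrt hn'.le
  have hsn1 : √(n + 1) ^ 2 = n + 1 := sq_sqrt (by positivity)
  induction k using Fin.lastCases <;> induction j using Fin.lastCases <;>
    simp only [simplexVec_castSucc hn, simplexVec_last, inner_sub_left, inner_sub_right,
      real_inner_smul_left, real_inner_smul_right,
      inner_single_one_single_one, inner_single_one_ones, inner_ones_single_one, inner_ones_ones,
      Fin.castSucc_inj, Fin.castSucc_ne_last, fun k => (Fin.castSucc_ne_last k).symm, if_true, if_false]
  · field_simp
    linear_combination -hsn
  · field_simp
    linear_combination hsn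
  · field_simp
    linear_combination hsn
  · split_ifs
    · field_simp
      linear_combination ((n : ℝ) - 1) * hsn1 - n * hsn
    · field_simp
      linear_combination hsn - hsn1

end SimplexVec

theorem sum_snoc_zero_smul {R M : Type*} [Semiring R] [AddCommMonoid M] [Module R M] {n : ℕ}
    (α : Fin n → R) (f : Fin (n + 1) → M) :
    ∑ j, Fin.snoc (α := fun _ => R) α 0 j • f j = ∑ k : Fin n, α k • f k.castSucc := by
  simp [Fin.sum_univ_castSucc]

theorem stmt_4_general (n d : ℕ) (hn : 2 ≤ n)
    (α : Fin n → ℝ) (hα : 0 < ∑ k, |α k|) (μ : ℝ)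
    (v : EuclideanSpace ℝ (Fin n))
    (hv : v = ∑ k : Fin n, α k • simplexVec n k.castSucc)
    (heig : ∑ k : Fin (n + 1), ⟪v, simplexVec n k⟫ ^ (d - 1) • simplexVec n k = μ • v)
    (σ : Equiv.Perm (Fin (n + 1)))
    (w : EuclideanSpace ℝ (Fin n))
    (hw : w = ∑ k : Fin n, α k • simplexVec n (σ k.castSucc)) :
    w ≠ 0 ∧
      ∑ k : Fin (n + 1), ⟪w, simplexVec n k⟫ ^ (d - 1) • simplexVec n k = μ • w := by
  have hn0 : 0 < n := by omega
  have hgram := inner_simplexVec hn0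
  have hc : 1 + 1 / (n : ℝ) ≠ 0 := by positivity
  have hsum : ∑ k, simplexVec n k = 0 := sum_eq_zero_of_inner_eq_ite hgram (by simp [field])
  set β : Fin (n + 1) → ℝ := Fin.snoc (α := fun _ => ℝ) α 0
  rw [← sum_snoc_zero_smul] at hv
  rw [← sum_snoc_zero_smul (f := fun j => simplexVec n (σ j))] at hw
  subst hv hw
  refine ⟨fun hzero => hα.ne' ?_, sum_apply_inner_smul_eq_smul_comp_perm hgram hc hsum β σ _ μ heig⟩
  rw [sum_smul_comp_perm_eq_zero_iff hgram hc hsum,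
    sum_smul_eq_zero_iff_of_inner_eq_ite hgram hc hsum] at hzero
  refine Fintype.sum_eq_zero _ fun k => ?_
  simpa using hzero k.castSucc (Fin.last n)

theorem stmt_4 (n d : ℕ) (hn : 2 ≤ n) (hd : 2 ≤ d)
    (α : Fin n → ℝ) (hα : 0 < ∑ k, |α k|) (μ : ℝ)
    (v : EuclideanSpace ℝ (Fin n))
    (hv : v = ∑ k : Fin n, α k • simplexVec n k.castSucc)
    (heig : ∑ k : Fin (n + 1), ⟪v, simplexVec n k⟫ ^ (d - 1) • simplexVec n k = μ • v)
    (σ : Equiv.Perm (Fin (n + 1)))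
    (w : EuclideanSpace ℝ (Fin n))
    (hw : w = ∑ k : Fin n, α k • simplexVec n (σ k.castSucc)) :
    w ≠ 0 ∧
      ∑ k : Fin (n + 1), ⟪w, simplexVec n k⟫ ^ (d - 1) • simplexVec n k = μ • w :=
  stmt_4_general n d hn α hα μ v hv heig σ w hw
end

section
/- Let d ≥ 3 be odd, n = 2, and T = Σ_{k=1}^3 v_k^{⊗d} with v_1,v_2,v_3 the simplex frame in ℝ². Then the set of normalized eigenpairs of T is exactly {(±v_k, ±(1 − 2^{1−d})) : 1 ≤ k ≤ 3} (six eigenpairs in total). In particular, T has no orthogonal pair of eigenvectors, so T is not orthogonally decomposable. -/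
open scoped RealInnerProductSpace

/-!
Write `a_j = ⟪x, v_j⟫` and `m = d - 1`. Pairing `T x^m = μ x` with `v_j` gives
`3 a_j^m - 2 μ a_j = ∑_k a_k^m` for every `j`, so the three numbers `a_j` lie in one level set of
the strictly convex function `t ↦ t^m - (2 μ / 3) t`, and two of them coincide. As the frame is tight,
`∑ a_k = 0` and `∑ a_k² = 3/2` for a unit vector `x`, which then forces `a_k = ±1` for the third
index, i.e. `x = ±v_k`. Since `⟪v_j, v_k⟫ ∈ {1, -1/2}`, no two of these are orthogonal.
-/

open Finset

theorem StrictConvexOn.eq_or_eq_of_apply_eq {f : ℝ → ℝ} {s : Set ℝ} (hf : StrictConvexOn ℝ s f)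
    {a b c : ℝ} (ha : a ∈ s) (hb : b ∈ s) (hc : c ∈ s) (hab : a ≠ b) (hfab : f a = f b)
    (hfc : f c = f a) : c = a ∨ c = b := by
  wlog hlt : a < b generalizing a b
  · exact (this hb ha hab.symm hfab.symm (hfc.trans hfab)
      (lt_of_le_of_ne (not_lt.mp hlt) hab.symm)).symm
  have between {x y z : ℝ} (hx : x ∈ s) (hy : y ∈ s) (hxz : x < z) (hzy : z < y) :
      f z < max (f x) (f y) :=
    hf.lt_on_openSegment hx hy (hxz.trans hzy).ne
      (by rw [openSegment_eq_Ioo (hxz.trans hzy)]; exact ⟨hxz, hzy⟩)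
  by_contra! hne
  rcases hne.1.lt_or_gt with hca | hac
  · have := between hc hb hca hlt
    simp [hfc, ← hfab] at this
  · rcases hne.2.lt_or_gt with hcb | hbc
    · have := between ha hb hac hcb
      simp [hfc, ← hfab] at this
    · have := between ha hc hlt hbc
      simp [hfc, ← hfab] at this

theorem eq_or_eq_neg_of_inner_sq_eq_one {E : Type*} [NormedAddCommGroup E] [InnerProductSpace ℝ E]
    {x y : E} (hx : ‖x‖ = 1) (hy : ‖y‖ = 1) (h : ⟪x, y⟫ ^ 2 = 1) : x = y ∨ x = -y := by
  rcases sq_eq_one_iff.mp h with h | h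
  · exact Or.inl ((inner_eq_one_iff_of_norm_eq_one (𝕜 := ℝ) hx hy).mp h)
  · have hnx : ‖-x‖ = 1 := by rwa [norm_neg]
    refine Or.inr (neg_eq_iff_eq_neg.mp ((inner_eq_one_iff_of_norm_eq_one (𝕜 := ℝ) hnx hy).mp ?_))
    rw [inner_neg_left, h, neg_neg]

theorem sq_eq_one_of_eq_of_sum_sq {a b c : ℝ} (hsum : a + b + c = 0)
    (hsq : a ^ 2 + b ^ 2 + c ^ 2 = 3 / 2) (hab : a = b) : c ^ 2 = 1 := by
  subst hab
  have hc : c = -(2 * a) := by linarith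
  subst hc
  linear_combination 2 / 3 * hsq

theorem neg_half_pow_pred {d : ℕ} (hd : Odd d) :
    (-(1 / 2) : ℝ) ^ (d - 1) = (2 : ℝ) ^ (1 - (d : ℤ)) := by
  obtain ⟨k, rfl⟩ := hd
  rw [Nat.add_sub_cancel, (even_two_mul k).neg_pow]
  push_cast
  rw [show 1 - (2 * (k : ℤ) + 1) = -((2 * k : ℕ) : ℤ) by push_cast; ring, zpow_neg, zpow_natCast,
    one_div, inv_pow]

variable {E : Type*} [NormedAddCommGroup E] [InnerProductSpace ℝ E]

structure IsSimplexFrame (v : Fin 3 → E) : Prop where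
  norm_eq_one : ∀ k, ‖v k‖ = 1
  inner_eq_neg_half : ∀ j k, j ≠ k → ⟪v j, v k⟫ = -(1 / 2)

namespace IsSimplexFrame

variable {v : Fin 3 → E}

theorem inner_self (hv : IsSimplexFrame v) (k : Fin 3) : ⟪v k, v k⟫ = 1 := by
  rw [real_inner_self_eq_norm_sq, hv.norm_eq_one, one_pow]

theorem inner_sum_smul_left (hv : IsSimplexFrame v) (c : Fin 3 → ℝ) (j : Fin 3) :
    ⟪∑ k, c k • v k, v j⟫ = 3 / 2 * c j - 1 / 2 * ∑ k, c k := by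
  fin_cases j <;>
    simp only [Fin.zero_eta, Fin.mk_one, Fin.reduceFinMk, Fin.sum_univ_three, inner_add_left,
      real_inner_smul_left, hv.inner_self, ne_eq, Fin.reduceEq, not_false_eq_true,
      hv.inner_eq_neg_half] <;> ring

theorem sum_eq_zero (hv : IsSimplexFrame v) : ∑ k, v k = 0 := by
  have h : ∀ j, ⟪∑ k, (1 : ℝ) • v k, v j⟫ = 0 := fun j => by
    rw [hv.inner_sum_smul_left, Fin.sum_univ_three]
    norm_num
  simp only [one_smul] at h
  rw [← inner_self_eq_zero (𝕜 := ℝ), inner_sum]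
  exact Finset.sum_eq_zero fun j _ => h j

theorem sum_inner_eq_zero (hv : IsSimplexFrame v) (x : E) : ∑ k, ⟪x, v k⟫ = 0 := by
  rw [← inner_sum, hv.sum_eq_zero, inner_zero_right]

theorem sum_inner_pow_smul_self (hv : IsSimplexFrame v) (m : ℕ) (k : Fin 3) :
    ∑ j, ⟪v k, v j⟫ ^ m • v j = (1 - (-(1 / 2) : ℝ) ^ m) • v k := by
  calc ∑ j, ⟪v k, v j⟫ ^ m • v j = v k + ∑ j ∈ univ.erase k, (-(1 / 2) : ℝ) ^ m • v j := by
        rw [← add_sum_erase _ _ (mem_univ k), hv.inner_self, one_pow, one_smul]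
        congr 1
        refine sum_congr rfl fun j hj => ?_
        rw [hv.inner_eq_neg_half k j (ne_of_mem_erase hj).symm]
    _ = v k + (-(1 / 2) : ℝ) ^ m • -v k := by
        rw [← smul_sum, sum_erase_eq_sub (mem_univ k), hv.sum_eq_zero, zero_sub]
    _ = (1 - (-(1 / 2) : ℝ) ^ m) • v k := by module

theorem linearIndependent_pair (hv : IsSimplexFrame v) : LinearIndependent ℝ ![v 0, v 1] := by
  rw [LinearIndependent.pair_iff]
  intro s t hst
  have h0 := hv.inner_sum_smul_left ![s, t, 0] 0
  have h1 := hv.inner_sum_smul_left ![s, t, 0] 1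
  simp only [Fin.sum_univ_three, Matrix.cons_val_zero, Matrix.cons_val_one, Matrix.cons_val, hst,
    zero_smul, add_zero, inner_zero_left] at h0 h1
  constructor <;> linarith

theorem sum_inner_smul (hv : IsSimplexFrame v) (hE : Module.finrank ℝ E = 2) (x : E) :
    ∑ k, ⟪x, v k⟫ • v k = (3 / 2 : ℝ) • x := by
  have key : ∀ j, ⟪v j, ∑ k, ⟪x, v k⟫ • v k⟫ = ⟪v j, (3 / 2 : ℝ) • x⟫ := fun j => by
    rw [real_inner_comm, hv.inner_sum_smul_left, hv.sum_inner_eq_zero, real_inner_smul_right,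
      real_inner_comm]
    ring
  refine InnerProductSpace.ext_inner_left_basis
    (basisOfLinearIndependentOfCardEqFinrank hv.linearIndependent_pair (by simp [hE])) fun i => ?_
  rw [coe_basisOfLinearIndependentOfCardEqFinrank]
  fin_cases i
  exacts [key 0, key 1]

theorem sum_inner_sq (hv : IsSimplexFrame v) (hE : Module.finrank ℝ E = 2) (x : E) :
    ∑ k, ⟪x, v k⟫ ^ 2 = 3 / 2 * ‖x‖ ^ 2 := by
  have h := congrArg (⟪x, ·⟫) (hv.sum_inner_smul hE x)
  simpa only [inner_sum, real_inner_smul_right, real_inner_self_eq_norm_sq, ← sq] using h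

theorem three_mul_inner_pow_sub_eq_sum {m : ℕ} {x : E} {μ : ℝ} (hv : IsSimplexFrame v)
    (h : ∑ k, ⟪x, v k⟫ ^ m • v k = μ • x) (j : Fin 3) :
    3 * ⟪x, v j⟫ ^ m - 2 * μ * ⟪x, v j⟫ = ∑ k, ⟪x, v k⟫ ^ m := by
  have h' := hv.inner_sum_smul_left (fun k => ⟪x, v k⟫ ^ m) j
  rw [h, real_inner_smul_left] at h'
  linarith

theorem exists_inner_sq_eq_one {m : ℕ} {x : E} {μ : ℝ} (hv : IsSimplexFrame v)
    (hE : Module.finrank ℝ E = 2) (hm : Even m) (hm0 : m ≠ 0) (hx : ‖x‖ = 1)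
    (h : ∑ k, ⟪x, v k⟫ ^ m • v k = μ • x) : ∃ k, ⟪x, v k⟫ ^ 2 = 1 := by
  have hconv : StrictConvexOn ℝ Set.univ fun t : ℝ => t ^ m - 2 * μ / 3 * t :=
    (hm.strictConvexOn_pow hm0).sub_concaveOn
      ((LinearMap.mul ℝ ℝ (2 * μ / 3)).concaveOn convex_univ)
  have hlevel : ∀ j, ⟪x, v j⟫ ^ m - 2 * μ / 3 * ⟪x, v j⟫ = (∑ k, ⟪x, v k⟫ ^ m) / 3 := fun j => by
    linarith [hv.three_mul_inner_pow_sub_eq_sum h j]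
  have hsum := hv.sum_inner_eq_zero x
  have hsq := hv.sum_inner_sq hE x
  rw [hx, Fin.sum_univ_three] at hsq
  rw [Fin.sum_univ_three] at hsum
  by_cases h01 : ⟪x, v 0⟫ = ⟪x, v 1⟫
  · exact ⟨2, sq_eq_one_of_eq_of_sum_sq hsum (by linarith) h01⟩
  rcases hconv.eq_or_eq_of_apply_eq (Set.mem_univ _) (Set.mem_univ _) (Set.mem_univ ⟪x, v 2⟫)
    h01 ((hlevel 0).trans (hlevel 1).symm) ((hlevel 2).trans (hlevel 0).symm) with h20 | h21
  · exact ⟨1, sq_eq_one_of_eq_of_sum_sq (a := ⟪x, v 0⟫) (b := ⟪x, v 2⟫) (by linarith)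
      (by linarith) h20.symm⟩
  · exact ⟨0, sq_eq_one_of_eq_of_sum_sq (a := ⟪x, v 1⟫) (b := ⟪x, v 2⟫) (by linarith)
      (by linarith) h21.symm⟩

theorem eigenpair_iff {m : ℕ} (hv : IsSimplexFrame v) (hE : Module.finrank ℝ E = 2)
    (hm : Even m) (hm0 : m ≠ 0) (x : E) (μ : ℝ) :
    (‖x‖ = 1 ∧ ∑ k, ⟪x, v k⟫ ^ m • v k = μ • x) ↔
      ∃ k, (x = v k ∧ μ = 1 - (-(1 / 2) : ℝ) ^ m) ∨
        (x = -v k ∧ μ = -(1 - (-(1 / 2) : ℝ) ^ m)) := by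
  have hneg (y : E) : ∑ k, ⟪-y, v k⟫ ^ m • v k = ∑ k, ⟪y, v k⟫ ^ m • v k := by
    simp only [inner_neg_left, hm.neg_pow]
  constructor
  · rintro ⟨hx, h⟩
    obtain ⟨k, hk⟩ := hv.exists_inner_sq_eq_one hE hm hm0 hx h
    have hvk : v k ≠ 0 := norm_ne_zero_iff.mp (by simp [hv.norm_eq_one])
    refine ⟨k, ?_⟩
    rcases eq_or_eq_neg_of_inner_sq_eq_one hx (hv.norm_eq_one k) hk with rfl | rfl
    · rw [hv.sum_inner_pow_smul_self] at h
      exact Or.inl ⟨rfl, smul_left_injective ℝ hvk h.symm⟩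
    · rw [hneg, hv.sum_inner_pow_smul_self, smul_neg] at h
      exact Or.inr ⟨rfl, smul_left_injective ℝ hvk (by simp only [neg_smul, h, neg_neg])⟩
  · rintro ⟨k, ⟨rfl, rfl⟩ | ⟨rfl, rfl⟩⟩
    · exact ⟨hv.norm_eq_one k, hv.sum_inner_pow_smul_self m k⟩
    · exact ⟨by rw [norm_neg, hv.norm_eq_one],
        by rw [hneg, hv.sum_inner_pow_smul_self, neg_smul_neg]⟩

theorem inner_ne_zero (hv : IsSimplexFrame v) (j k : Fin 3) : ⟪v j, v k⟫ ≠ 0 := by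
  rcases eq_or_ne j k with rfl | hjk
  · rw [hv.inner_self]
    exact one_ne_zero
  · simp [hv.inner_eq_neg_half j k hjk]

theorem not_exists_orthogonal_eigenvectors {m : ℕ} (hv : IsSimplexFrame v)
    (hE : Module.finrank ℝ E = 2) (hm : Even m) (hm0 : m ≠ 0) :
    ¬ ∃ (x y : E) (μ ν : ℝ), ‖x‖ = 1 ∧ ‖y‖ = 1 ∧ ⟪x, y⟫ = 0 ∧
      (∑ k, ⟪x, v k⟫ ^ m • v k = μ • x) ∧ (∑ k, ⟪y, v k⟫ ^ m • v k = ν • y) := by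
  rintro ⟨x, y, μ, ν, hx, hy, hxy, hex, hey⟩
  obtain ⟨j, hj⟩ := (hv.eigenpair_iff hE hm hm0 x μ).mp ⟨hx, hex⟩
  obtain ⟨k, hk⟩ := (hv.eigenpair_iff hE hm hm0 y ν).mp ⟨hy, hey⟩
  rcases hj with ⟨rfl, -⟩ | ⟨rfl, -⟩ <;> rcases hk with ⟨rfl, -⟩ | ⟨rfl, -⟩ <;>
    simp [hv.inner_ne_zero] at hxy

end IsSimplexFrame

theorem stmt_18_general (d : ℕ) (hd : 3 ≤ d) (hdodd : Odd d)
    (v : Fin 3 → EuclideanSpace ℝ (Fin 2))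
    (hnorm : ∀ k, ‖v k‖ = 1)
    (hinner : ∀ j k, j ≠ k → ⟪v j, v k⟫ = -(1 / 2)) :
    (∀ (x : EuclideanSpace ℝ (Fin 2)) (μ : ℝ),
      (‖x‖ = 1 ∧ ∑ k, ⟪x, v k⟫ ^ (d - 1) • v k = μ • x) ↔
        ∃ k, (x = v k ∧ μ = 1 - (2 : ℝ) ^ (1 - (d : ℤ))) ∨
          (x = -v k ∧ μ = -(1 - (2 : ℝ) ^ (1 - (d : ℤ))))) ∧
    ¬ ∃ (x y : EuclideanSpace ℝ (Fin 2)) (μ ν : ℝ),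
        ‖x‖ = 1 ∧ ‖y‖ = 1 ∧ ⟪x, y⟫ = 0 ∧
        (∑ k, ⟪x, v k⟫ ^ (d - 1) • v k = μ • x) ∧
        (∑ k, ⟪y, v k⟫ ^ (d - 1) • v k = ν • y) := by
  have hv : IsSimplexFrame v := ⟨hnorm, hinner⟩
  have hE : Module.finrank ℝ (EuclideanSpace ℝ (Fin 2)) = 2 := finrank_euclideanSpace_fin
  have hm : Even (d - 1) := Nat.Odd.sub_odd hdodd odd_one
  have hm0 : d - 1 ≠ 0 := by omega
  refine ⟨fun x μ => ?_, hv.not_exists_orthogonal_eigenvectors hE hm hm0⟩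
  rw [hv.eigenpair_iff hE hm hm0, neg_half_pow_pred hdodd]

theorem stmt_18 (d : ℕ) (hd : 3 ≤ d) (hdodd : Odd d)
    (v : Fin 3 → EuclideanSpace ℝ (Fin 2))
    (hnorm : ∀ k, ‖v k‖ = 1)
    (hinner : ∀ j k, j ≠ k → ⟪v j, v k⟫ = -(1 / 2))
    (hsum : ∑ k, v k = 0) :
    (∀ (x : EuclideanSpace ℝ (Fin 2)) (μ : ℝ),
      (‖x‖ = 1 ∧ ∑ k, ⟪x, v k⟫ ^ (d - 1) • v k = μ • x) ↔
        ∃ k, (x = v k ∧ μ = 1 - (2 : ℝ) ^ (1 - (d : ℤ))) ∨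
          (x = -v k ∧ μ = -(1 - (2 : ℝ) ^ (1 - (d : ℤ))))) ∧
    ¬ ∃ (x y : EuclideanSpace ℝ (Fin 2)) (μ ν : ℝ),
        ‖x‖ = 1 ∧ ‖y‖ = 1 ∧ ⟪x, y⟫ = 0 ∧
        (∑ k, ⟪x, v k⟫ ^ (d - 1) • v k = μ • x) ∧
        (∑ k, ⟪y, v k⟫ ^ (d - 1) • v k = ν • y) :=
  stmt_18_general d hd hdodd v hnorm hinner
end
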